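/- Let h32 be the Lie algebra (0,0,12,13,14+23,34+52). Then Z(h32) = R·e6, and for any Lie algebra automorphism φ of h32, the coefficient of e1 in φ(e2) vanishes, i.e. φ(e2) ∈ span(e2,...,e6). -/
import Mathlib

open Submodule

abbrev V6 : Type := Fin 6 → ℝ

def e (i : Fin 6) : V6 := Pi.single i 1

/-- Bracket of h32 = (0,0,12,13,14+23,34+52): [e1,e2]=e3, [e1,e3]=e4, [e1,e4]=e5,
[e2,e3]=e5, [e3,e4]=e6, [e5,e2]=e6. -/
def br (x y : V6) : V6 :=
  ![0, 0, x 0 * y 1 - x 1 * y 0, x 0 * y 2 - x 2 * y 0,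
    x 0 * y 3 - x 3 * y 0 + (x 1 * y 2 - x 2 * y 1),
    x 2 * y 3 - x 3 * y 2 + (x 4 * y 1 - x 1 * y 4)]

lemma e_apply (i j : Fin 6) : e i j = if j = i then 1 else 0 := by
  simp [e, Pi.single_apply]

lemma br_e5 (y : V6) : br (e 5) y = 0 := by
  funext j
  fin_cases j <;> simp [br, e_apply] <;> rfl

lemma ad3_e1 (z : V6) : br (e 1) (br (e 1) (br (e 1) z)) = z 0 • e 5 := by
  funext j
  fin_cases j <;> simp [br, e_apply] <;> first | rfl | ring

lemma ad3_comp4 (X : V6) : (br X (br X (br X (e 1)))) 4 = (X 0) ^ 3 := by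
  simp [br, e_apply, Matrix.cons_val_succ, Matrix.cons_val_zero]
  ring

theorem h32_center_and_aut :
    {x : V6 | ∀ y, br x y = 0} = ((span ℝ {e 5} : Submodule ℝ V6) : Set V6) ∧
    ∀ φ : V6 ≃ₗ[ℝ] V6, (∀ x y, φ (br x y) = br (φ x) (φ y)) →
      φ (e 1) ∈ span ℝ {e 1, e 2, e 3, e 4, e 5} := by
  have hcenter : {x : V6 | ∀ y, br x y = 0} = ((span ℝ {e 5} : Submodule ℝ V6) : Set V6) := by
    ext x
    simp only [Set.mem_setOf_eq, SetLike.mem_coe, mem_span_singleton]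
    constructor
    · intro h
      have h0 := congrFun (h (e 0))
      have h1 := congrFun (h (e 1))
      have hx0 : x 0 = 0 := by have := h1 2; simpa [br, e_apply] using this
      have hx1 : x 1 = 0 := by have := h0 2; simpa [br, e_apply] using this
      have hx2 : x 2 = 0 := by have := h0 3; simpa [br, e_apply] using this
      have hx3 : x 3 = 0 := by have := h0 4; simpa [br, e_apply, hx1, hx2] using this
      have hx4 : x 4 = 0 := by have := h1 5; simpa [br, e_apply, hx1, hx2, hx3] using this
      refine ⟨x 5, ?_⟩
      funext j
      fin_cases j <;> simp [e_apply, hx0, hx1, hx2, hx3, hx4]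
    · rintro ⟨c, rfl⟩ y
      funext j
      fin_cases j <;> simp [br, e_apply] <;> rfl
  refine ⟨hcenter, fun φ hφ => ?_⟩
  -- φ (e 5) is in the center, hence a multiple of e 5
  have hφ5 : ∀ y, br (φ (e 5)) y = 0 := by
    intro y
    have : br (φ (e 5)) (φ (φ.symm y)) = φ (br (e 5) (φ.symm y)) := (hφ _ _).symm
    rw [φ.apply_symm_apply] at this
    rw [this, br_e5, map_zero]
  have hφ5' : φ (e 5) ∈ span ℝ {e 5} := by
    have : φ (e 5) ∈ {x : V6 | ∀ y, br x y = 0} := hφ5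
    rwa [hcenter] at this
  obtain ⟨c, hc⟩ := mem_span_singleton.mp hφ5'
  have hφ54 : (φ (e 5)) 4 = 0 := by
    rw [← hc]; simp [e_apply]
  -- (ad X)^3 (e 1) = k • φ (e 5) where X = φ (e 1)
  set X := φ (e 1) with hX
  have key : br X (br X (br X (e 1))) = ((φ.symm (e 1)) 0) • φ (e 5) := by
    have h1 : br X (br X (br X (φ (φ.symm (e 1))))) =
        φ (br (e 1) (br (e 1) (br (e 1) (φ.symm (e 1))))) := by
      rw [hφ, hφ, hφ]
    rw [φ.apply_symm_apply] at h1
    rw [h1, ad3_e1, map_smul]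
  have hX0 : X 0 = 0 := by
    have h4 := congrFun key 4
    rw [ad3_comp4] at h4
    simp only [Pi.smul_apply, hφ54, smul_eq_mul, mul_zero] at h4
    exact pow_eq_zero_iff (by norm_num) |>.mp h4
  -- conclude membership
  have hdecomp : X = X 1 • e 1 + X 2 • e 2 + X 3 • e 3 + X 4 • e 4 + X 5 • e 5 := by
    funext j
    fin_cases j <;> simp [e_apply, hX0]
  rw [hdecomp]
  have mem : ∀ i ∈ ({e 1, e 2, e 3, e 4, e 5} : Set V6), i ∈ span ℝ ({e 1, e 2, e 3, e 4, e 5} : Set V6) :=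
    fun i hi => subset_span hi
  refine add_mem (add_mem (add_mem (add_mem ?_ ?_) ?_) ?_) ?_ <;>
    exact smul_mem _ _ (subset_span (by simp))
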